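/- arXiv:1710.04079 — 2 statements merged into one kernel-verified Lean document; each statement's English description precedes it below -/
import Mathlib

section
/- Let A and B be tensors of order m and dimension n with |B| ≤ A entrywise (A nonnegative). Then ρ(B) ≤ ρ(A). Moreover, if A is weakly irreducible and ρ(B) = ρ(A), with λ = ρ(A)e^{iθ} an eigenvalue of B corresponding to eigenvector y, then every entry of y is nonzero and A = e^{-iθ} D^{-(m-1)} B D where D = diag(y₁/|y₁|, …, y_n/|y_n|). -/
open scoped BigOperators

namespace PaperTensor

/-- A tensor of order `m` and dimension `|ι|`: entry `A i f` is `a_{i, f 0, …, f (m-2)}`. -/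
abbrev Tensor (ι : Type) (m : ℕ) : Type := ι → (Fin (m - 1) → ι) → ℂ

variable {ι : Type} [Fintype ι] {m : ℕ}

/-- `(A x^{m-1})_i = ∑ a_{i i₂ … i_m} x_{i₂} ⋯ x_{i_m}`. -/
noncomputable def tApp (A : Tensor ι m) (x : ι → ℂ) (i : ι) : ℂ :=
  ∑ f : Fin (m - 1) → ι, A i f * ∏ j, x (f j)

/-- `x ≠ 0` and `A x^{m-1} = l x^{[m-1]}`. -/
def IsEigPair (A : Tensor ι m) (l : ℂ) (x : ι → ℂ) : Prop :=
  x ≠ 0 ∧ ∀ i, tApp A x i = l * x i ^ (m - 1)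

def Eigenvalues (A : Tensor ι m) : Set ℂ := {l | ∃ x, IsEigPair A l x}

/-- The spectral radius: the largest modulus of an eigenvalue. -/
noncomputable def specRad (A : Tensor ι m) : ℝ := sSup ((fun z : ℂ => ‖z‖) '' Eigenvalues A)

/-- All entries are nonnegative reals. -/
def Nonneg (A : Tensor ι m) : Prop := ∀ i f, ∃ r : ℝ, 0 ≤ r ∧ A i f = (r : ℂ)

/-- Arc `(i,j)` of the directed graph `G(A)`. -/
def Arc (A : Tensor ι m) (i j : ι) : Prop := ∃ f, A i f ≠ 0 ∧ ∃ k, f k = j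

/-- `G(A)` is strongly connected. -/
def WeaklyIrreducible (A : Tensor ι m) : Prop :=
  ∀ i j : ι, Relation.ReflTransGen (Arc A) i j

/-- The projective eigenvariety `PV_l(A) ⊆ ℙ^{n-1}`. -/
def PV (A : Tensor ι m) (l : ℂ) : Set (Projectivization ℂ (ι → ℂ)) :=
  {p | ∃ (v : ι → ℂ) (hv : v ≠ 0), Projectivization.mk ℂ v hv = p ∧
        ∀ i, tApp A v i = l * v i ^ (m - 1)}

/-- `(D^{-(m-1)} A D)_{i₁…i_m} = d_{i₁}^{-(m-1)} a_{i₁…i_m} d_{i₂} ⋯ d_{i_m}`. -/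
noncomputable def diagConj (d : ι → ℂ) (A : Tensor ι m) : Tensor ι m :=
  fun i f => (d i)⁻¹ ^ (m - 1) * A i f * ∏ j, d (f j)

/-- Combinatorial symmetry: the support is invariant under permutations of indices. -/
def CombSymm (A : Tensor ι m) : Prop :=
  ∀ i f i' f', (i ::ₘ Multiset.map f Finset.univ.val) = (i' ::ₘ Multiset.map f' Finset.univ.val) →
    (A i f ≠ 0 ↔ A i' f' ≠ 0)

/-- Irreducibility of a tensor. -/
def Irred (A : Tensor ι m) : Prop :=
  ¬ ∃ S : Set ι, S.Nonempty ∧ S ≠ Set.univ ∧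
      ∀ i ∈ S, ∀ f : Fin (m - 1) → ι, (∀ j, f j ∉ S) → A i f = 0

/-- Solid arc: `(i,j)` arising from a nonzero entry `a_{ij…j}`. -/
def SolidArc (A : Tensor ι m) (i j : ι) : Prop := A i (fun _ => j) ≠ 0

/-- Spectral `ℓ`-symmetry: `Spec(A) = e^{2πi/ℓ} Spec(A)`. -/
def SpectralSymm (A : Tensor ι m) (ℓ : ℕ) : Prop :=
  Eigenvalues A = (fun z => Complex.exp ((2 * Real.pi / ℓ : ℝ) * Complex.I) * z) '' Eigenvalues A

/-- The set `𝔇^{(j)}(A)` (for the given `ℓ`), as diagonal matrices recorded by their diagonals. -/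
def Dgj {n m : ℕ} [NeZero n] (A : Tensor (Fin n) m) (ℓ j : ℕ) : Set (Fin n → ℂ) :=
  {d | (∀ i, d i ≠ 0) ∧ d 0 = 1 ∧
    ∀ i f, A i f = Complex.exp (-(2 * Real.pi * j / ℓ : ℝ) * Complex.I) * diagConj d A i f}

/-- The group `𝔇(A) = ⋃_{j=0}^{ℓ-1} 𝔇^{(j)}(A)`. -/
def DgAll {n m : ℕ} [NeZero n] (A : Tensor (Fin n) m) (ℓ : ℕ) : Set (Fin n → ℂ) :=
  {d | ∃ j < ℓ, d ∈ Dgj A ℓ j}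

/-- `𝔇^{(0)}(A)`. -/
def Dg0 {n m : ℕ} [NeZero n] (A : Tensor (Fin n) m) : Set (Fin n → ℂ) :=
  {d | (∀ i, d i ≠ 0) ∧ d 0 = 1 ∧ ∀ i f, A i f = diagConj d A i f}

/-- Restriction (principal subtensor) of `A` to a set `S` of indices. -/
def restrict (A : Tensor ι m) (S : Set ι) : Tensor S m :=
  fun i f => A i.1 (fun j => (f j).1)

/-!
Write `A = M` with `M` a nonnegative real tensor. Maximizing the Collatz–Wielandt value `μ` subject
to `μ x^{[k]} ≤ M x^k` over the compact simplex gives, for positive tensors, an eigenpair `(x, λ)`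
with `λ` maximal; for `M` itself take a limit of the positive tensors `M + ε`. For any `C` with
`|C| ≤ M` and eigenpair `(l, w)`, `|w|` is a sub-eigenvector of `M` at `‖l‖`, so `‖l‖ ≤ λ`; hence
`ρ(B) ≤ λ = ρ(A)`. If `A` is weakly irreducible the limit `x` stays positive, since positive
sub-eigenvectors are bounded below uniformly along paths of arcs. In the equality case `|y|` is a
sub-eigenvector at `λ`, hence a positive multiple of `x`, and `|(B y^{m-1})_i| ≤ (A |y|^{m-1})_i`
is an equality; it forces every term of `(B y^{m-1})_i` to carry the phase of the sum, which is
the diagonal similarity.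
-/

open Finset Filter Topology Relation

/-- A real tensor of order `k + 1`; a `Tensor ι m` corresponds to `k = m - 1`. -/
abbrev RealTensor (ι : Type) (k : ℕ) : Type := ι → (Fin k → ι) → ℝ

variable {k : ℕ} {M N P : RealTensor ι k} {x y u : ι → ℝ} {lam μ s : ℝ}

noncomputable def rApp (M : RealTensor ι k) (x : ι → ℝ) (i : ι) : ℝ :=
  ∑ f : Fin k → ι, M i f * ∏ j, x (f j)

def RealArc (M : RealTensor ι k) (a b : ι) : Prop := ∃ f, M a f ≠ 0 ∧ ∃ j, f j = b

def IsSubEig (M : RealTensor ι k) (μ : ℝ) (u : ι → ℝ) : Prop :=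
  0 ≤ u ∧ u ≠ 0 ∧ ∀ i, μ * u i ^ k ≤ rApp M u i

/-- `lam` is the Collatz–Wielandt maximum of `M`, attained at the normalized eigenvector `x`. -/
structure IsPerronPair (M : RealTensor ι k) (x : ι → ℝ) (lam : ℝ) : Prop where
  mem_stdSimplex : x ∈ stdSimplex ℝ ι
  nonneg : 0 ≤ lam
  eig : ∀ i, rApp M x i = lam * x i ^ k
  le_of_isSubEig : ∀ μ u, IsSubEig M μ u → μ ≤ lam

lemma rApp_nonneg (hM : 0 ≤ M) (hx : 0 ≤ x) (i : ι) : 0 ≤ rApp M x i :=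
  sum_nonneg fun f _ => mul_nonneg (hM i f) (prod_nonneg fun j _ => hx (f j))

lemma mul_prod_le_rApp (hM : 0 ≤ M) (hx : 0 ≤ x) (i : ι) (f : Fin k → ι) :
    M i f * ∏ j, x (f j) ≤ rApp M x i :=
  single_le_sum (fun g _ => mul_nonneg (hM i g) (prod_nonneg fun j _ => hx (g j))) (mem_univ f)

lemma rApp_mono (hM : 0 ≤ M) (hx : 0 ≤ x) (hxy : x ≤ y) (i : ι) : rApp M x i ≤ rApp M y i :=
  sum_le_sum fun f _ => mul_le_mul_of_nonneg_left
    (prod_le_prod (fun j _ => hx (f j)) fun j _ => hxy (f j)) (hM i f)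

lemma rApp_mono_left (hMN : M ≤ N) (hx : 0 ≤ x) (i : ι) : rApp M x i ≤ rApp N x i :=
  sum_le_sum fun f _ => mul_le_mul_of_nonneg_right (hMN i f) (prod_nonneg fun j _ => hx (f j))

lemma rApp_lt_rApp (hk : k ≠ 0) (hM : ∀ i f, 0 < M i f) (hx : 0 ≤ x) (hxy : x ≤ y) {a : ι}
    (ha : x a < y a) (i : ι) : rApp M x i < rApp M y i := by
  refine sum_lt_sum (fun f _ => mul_le_mul_of_nonneg_left
    (prod_le_prod (fun j _ => hx (f j)) fun j _ => hxy (f j)) (hM i f).le)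
    ⟨fun _ => a, mem_univ _, ?_⟩
  simp only [prod_const, card_univ, Fintype.card_fin]
  exact mul_lt_mul_of_pos_left (pow_lt_pow_left₀ ha (hx a) hk) (hM i _)

lemma rApp_zero (hk : k ≠ 0) (i : ι) : rApp M 0 i = 0 := by
  simp [rApp, hk]

lemma rApp_smul (c : ℝ) (i : ι) : rApp M (c • x) i = c ^ k * rApp M x i := by
  simp only [rApp, mul_sum, Pi.smul_apply, smul_eq_mul, prod_mul_distrib, prod_const, card_univ,
    Fintype.card_fin]
  exact sum_congr rfl fun f _ => by ring

lemma continuous_rApp (i : ι) :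
    Continuous fun p : RealTensor ι k × (ι → ℝ) => rApp p.1 p.2 i := by
  unfold rApp
  fun_prop

lemma IsSubEig.exists_pos (h : IsSubEig M μ u) : ∃ i, 0 < u i :=
  (Pi.lt_def.1 (lt_of_le_of_ne h.1 (Ne.symm h.2.1))).2

lemma IsSubEig.mono_left (hMN : M ≤ N) (h : IsSubEig M μ u) : IsSubEig N μ u :=
  ⟨h.1, h.2.1, fun i => (h.2.2 i).trans (rApp_mono_left hMN h.1 i)⟩

lemma IsSubEig.smul (h : IsSubEig M μ u) {c : ℝ} (hc : 0 < c) : IsSubEig M μ (c • u) := by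
  refine ⟨smul_nonneg hc.le h.1, smul_ne_zero hc.ne' h.2.1, fun i => ?_⟩
  rw [rApp_smul, Pi.smul_apply, smul_eq_mul, mul_pow]
  nlinarith [h.2.2 i, pow_pos hc k]

lemma IsSubEig.le_sum (hM : 0 ≤ M) (h : IsSubEig M μ u) : μ ≤ ∑ i, ∑ f, M i f := by
  obtain ⟨j, hj⟩ := h.exists_pos
  have : Nonempty ι := ⟨j⟩
  obtain ⟨a, ha⟩ := Finite.exists_max u
  have hpow : 0 < u a ^ k := pow_pos (hj.trans_le (ha j)) k
  have hrow : rApp M u a ≤ (∑ f, M a f) * u a ^ k := by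
    rw [sum_mul]
    refine sum_le_sum fun f _ => mul_le_mul_of_nonneg_left ?_ (hM a f)
    calc ∏ l, u (f l) ≤ ∏ _l : Fin k, u a := prod_le_prod (fun l _ => h.1 _) fun l _ => ha _
      _ = u a ^ k := by simp
  calc μ ≤ ∑ f, M a f := le_of_mul_le_mul_right ((h.2.2 a).trans hrow) hpow
    _ ≤ ∑ i, ∑ f, M i f :=
      single_le_sum (fun i _ => sum_nonneg fun f _ => hM i f) (mem_univ a)

def cwSet (M : RealTensor ι k) : Set ((ι → ℝ) × ℝ) :=
  {p | p.1 ∈ stdSimplex ℝ ι ∧ 0 ≤ p.2 ∧ ∀ i, p.2 * p.1 i ^ k ≤ rApp M p.1 i}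

lemma ne_zero_of_mem_stdSimplex (hx : x ∈ stdSimplex ℝ ι) : x ≠ 0 := by
  rintro rfl
  simpa using hx.2

lemma isCompact_cwSet (hM : 0 ≤ M) : IsCompact (cwSet M) := by
  have hclosed : IsClosed (cwSet M) := by
    simp only [cwSet, Set.ofPred_and, Set.ofPred_forall]
    refine (isClosed_stdSimplex ℝ ι).preimage continuous_fst |>.inter <|
      (isClosed_le continuous_const continuous_snd).inter <| isClosed_iInter fun i => ?_
    exact isClosed_le (by fun_prop : Continuous fun p : (ι → ℝ) × ℝ => p.2 * p.1 i ^ k)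
      ((continuous_rApp i).comp (continuous_const.prodMk continuous_fst))
  refine ((isCompact_stdSimplex ℝ ι).prod (isCompact_Icc (a := 0) (b := ∑ i, ∑ f, M i f)))
    |>.of_isClosed_subset hclosed fun p hp => ⟨hp.1, hp.2.1, ?_⟩
  exact IsSubEig.le_sum hM ⟨hp.1.1, ne_zero_of_mem_stdSimplex hp.1, hp.2.2⟩

lemma IsSubEig.mem_cwSet (h : IsSubEig M μ u) (hμ : 0 ≤ μ) :
    ((∑ i, u i)⁻¹ • u, μ) ∈ cwSet M := by
  obtain ⟨j, hj⟩ := h.exists_pos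
  have hsum : 0 < ∑ i, u i := hj.trans_le (single_le_sum (fun i _ => h.1 i) (mem_univ j))
  have hc := h.smul (inv_pos.2 hsum)
  refine ⟨⟨hc.1, ?_⟩, hμ, hc.2.2⟩
  simp [← mul_sum, hsum.ne']

lemma exists_pos_add_le_of_forall_lt (h : ∀ i, s * u i ^ k < rApp M u i) :
    ∃ δ > 0, ∀ i, (s + δ) * u i ^ k ≤ rApp M u i := by
  have hev : ∀ᶠ δ in 𝓝 (0 : ℝ), ∀ i, (s + δ) * u i ^ k < rApp M u i := by
    refine eventually_all.2 fun i => ?_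
    have : Tendsto (fun δ => (s + δ) * u i ^ k) (𝓝 0) (𝓝 (s * u i ^ k)) := by
      simpa using (by fun_prop : Continuous fun δ : ℝ => (s + δ) * u i ^ k).tendsto 0
    exact this.eventually (gt_mem_nhds (h i))
  obtain ⟨δ, hδ, hpos⟩ := ((hev.filter_mono nhdsWithin_le_nhds).and
    (self_mem_nhdsWithin (s := Set.Ioi (0 : ℝ)))).exists
  exact ⟨δ, hpos, fun i => (hδ i).le⟩

/-- Raising one coordinate where the inequality is strict makes it strict in every row. -/
lemma exists_forall_lt_of_lt (hk : k ≠ 0) (hP : ∀ i f, 0 < P i f) (hx : IsSubEig P s x)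
    {a : ι} (ha : s * x a ^ k < rApp P x a) :
    ∃ w, IsSubEig P s w ∧ ∀ i, s * w i ^ k < rApp P w i := by
  classical
  have hcont : Tendsto (fun t => s * (x a + t) ^ k) (𝓝 0) (𝓝 (s * x a ^ k)) := by
    simpa using (by fun_prop : Continuous fun t : ℝ => s * (x a + t) ^ k).tendsto 0
  obtain ⟨t, ht, ht0⟩ := (((hcont.eventually (gt_mem_nhds ha)).filter_mono nhdsWithin_le_nhds).and
    (self_mem_nhdsWithin (s := Set.Ioi (0 : ℝ)))).exists
  set w := Function.update x a (x a + t)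
  have hxw : x ≤ w := fun j => by
    rcases eq_or_ne j a with rfl | h
    · simpa [w] using ht0.le
    · simp [w, h]
  have hxwa : x a < w a := by simpa [w] using ht0
  have hlt : ∀ i, s * w i ^ k < rApp P w i := fun i => by
    rcases eq_or_ne i a with rfl | h
    · simpa [w] using ht.trans_le (rApp_mono (fun i f => (hP i f).le) hx.1 hxw i)
    · simpa [w, h] using (hx.2.2 i).trans_lt (rApp_lt_rApp hk hP hx.1 hxw hxwa i)
  refine ⟨w, ⟨hx.1.trans hxw, fun h0 => ?_, fun i => (hlt i).le⟩, hlt⟩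
  simpa [h0] using (hx.1 a).trans_lt hxwa

theorem exists_isPerronPair_of_pos [Nonempty ι] (hk : k ≠ 0) (hP : ∀ i f, 0 < P i f) :
    ∃ x lam, IsPerronPair P x lam ∧ ∀ i, 0 < x i := by
  classical
  obtain ⟨⟨x, s⟩, ⟨hxS, hs, hsub⟩, hmax⟩ := (isCompact_cwSet fun i f => (hP i f).le).exists_isMaxOn
    ⟨(Pi.single (Classical.arbitrary ι) 1, 0), single_mem_stdSimplex ℝ _, le_rfl,
      fun i => by simpa using rApp_nonneg (fun i f => (hP i f).le) (by simp) i⟩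
    continuous_snd.continuousOn
  have hcw : ∀ μ u, IsSubEig P μ u → μ ≤ s := fun μ u hu =>
    (le_total μ 0).elim (fun h => h.trans hs) fun h => hmax (hu.mem_cwSet h)
  have hx : IsSubEig P s x := ⟨hxS.1, ne_zero_of_mem_stdSimplex hxS, hsub⟩
  have heig : ∀ i, rApp P x i = s * x i ^ k := by
    by_contra! ⟨a, ha⟩
    obtain ⟨w, hw, hlt⟩ := exists_forall_lt_of_lt hk hP hx ((hsub a).lt_of_ne ha.symm)
    obtain ⟨δ, hδ, hδw⟩ := exists_pos_add_le_of_forall_lt hlt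
    linarith [hcw _ _ ⟨hw.1, hw.2.1, hδw⟩]
  refine ⟨x, s, ⟨hxS, hs, heig, hcw⟩, fun i => ?_⟩
  obtain ⟨j, hj⟩ := hx.exists_pos
  have hpos : 0 < s * x i ^ k := by
    simpa [← heig, rApp_zero hk] using rApp_lt_rApp hk hP le_rfl hx.1 hj i
  refine (hx.1 i).lt_of_ne fun h => ?_
  rw [← h, Pi.zero_apply, zero_pow hk, mul_zero] at hpos
  exact hpos.false

lemma exists_bound_of_reflTransGen {α : Type*} {r : α → α → Prop} {c : ℝ} (hc : 0 < c)
    {a b : α} (h : ReflTransGen r a b) :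
    ∃ C > 0, ∀ v : α → ℝ, 0 ≤ v → (∀ i j, r i j → c * v j ≤ v i ^ k) → v a ≤ 1 → v b ≤ C := by
  induction h with
  | refl => exact ⟨1, one_pos, fun v _ _ h => h⟩
  | tail _ hbc ih =>
    obtain ⟨C, hC, hv⟩ := ih
    refine ⟨C ^ k / c, by positivity, fun v hv0 hr ha => ?_⟩
    rw [le_div_iff₀ hc, mul_comm]
    exact (hr _ _ hbc).trans (pow_le_pow_left₀ (hv0 _) (hv v hv0 hr ha) k)

lemma exists_pos_le_of_ne_zero [Nonempty ι] (M : RealTensor ι k) (hM : 0 ≤ M) :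
    ∃ c > 0, ∀ i f, M i f ≠ 0 → c ≤ M i f := by
  classical
  obtain ⟨p, hp⟩ := Finite.exists_min fun p : ι × (Fin k → ι) =>
    if M p.1 p.2 = 0 then 1 else M p.1 p.2
  refine ⟨_, ?_, fun i f hf => (hp (i, f)).trans_eq (if_neg hf)⟩
  split_ifs with h
  exacts [one_pos, (hM p.1 p.2).lt_of_ne' h]

lemma mul_le_of_realArc (hM : 0 ≤ M) {c : ℝ} (hc : ∀ i f, M i f ≠ 0 → c ≤ M i f)
    {v : ι → ℝ} (hv : ∀ i, 1 ≤ v i) (hsub : ∀ i, rApp M v i ≤ lam * v i ^ k) {a b : ι}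
    (hab : RealArc M a b) : c * v b ≤ lam * v a ^ k := by
  obtain ⟨f, hf, l, rfl⟩ := hab
  have hv0 : 0 ≤ v := fun i => zero_le_one.trans (hv i)
  have hprod : v (f l) ≤ ∏ j, v (f j) := by
    rw [← mul_prod_erase _ _ (mem_univ l)]
    exact le_mul_of_one_le_right (hv0 _) (one_le_prod fun j _ => hv _)
  calc c * v (f l) ≤ M a f * ∏ j, v (f j) :=
        mul_le_mul (hc a f hf) hprod (hv0 _) (hM a f)
    _ ≤ lam * v a ^ k := (mul_prod_le_rApp hM hv0 a f).trans (hsub a)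

lemma exists_inv_card_le_of_mem_stdSimplex [Nonempty ι] (hx : x ∈ stdSimplex ℝ ι) :
    ∃ i, (Fintype.card ι : ℝ)⁻¹ ≤ x i := by
  obtain ⟨i, hi⟩ := Finite.exists_max x
  refine ⟨i, (inv_le_iff_one_le_mul₀' (by exact_mod_cast Fintype.card_pos)).2 ?_⟩
  calc (1 : ℝ) = ∑ j, x j := hx.2.symm
    _ ≤ ∑ _j : ι, x i := sum_le_sum fun j _ => hi j
    _ = Fintype.card ι * x i := by simp

/-- Along a path of arcs the ratio of an entry to the smallest one grows at most by a fixed power,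
and some entry is at least `1 / card ι`. -/
theorem exists_pos_le_of_weaklyIrreducible [Nonempty ι] (hM : 0 ≤ M)
    (hirr : ∀ a b, ReflTransGen (RealArc M) a b) {R : ℝ} (hR : 0 < R) :
    ∃ δ > 0, ∀ z lam, z ∈ stdSimplex ℝ ι → (∀ i, 0 < z i) → lam ≤ R →
      (∀ i, rApp M z i ≤ lam * z i ^ k) → ∀ i, δ ≤ z i := by
  obtain ⟨c, hc, hcM⟩ := exists_pos_le_of_ne_zero M hM
  choose C hC hbound using fun p : ι × ι =>
    exists_bound_of_reflTransGen (k := k) (div_pos hc hR) (hirr p.1 p.2)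
  obtain ⟨p, hp⟩ := Finite.exists_max C
  refine ⟨(Fintype.card ι * C p)⁻¹, by have := hC p; positivity,
    fun z lam hz hzpos hlam hsub i => ?_⟩
  obtain ⟨a, ha⟩ := Finite.exists_min z
  obtain ⟨b, hb⟩ := exists_inv_card_le_of_mem_stdSimplex hz
  have hza := hzpos a
  set v := (z a)⁻¹ • z
  have hv : ∀ i, 1 ≤ v i := fun i => by simpa [v, one_le_inv_mul₀ hza] using ha i
  have hvsub : ∀ i, rApp M v i ≤ R * v i ^ k := fun i => by
    simp only [v, rApp_smul, Pi.smul_apply, smul_eq_mul, mul_pow]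
    calc (z a)⁻¹ ^ k * rApp M z i ≤ (z a)⁻¹ ^ k * (R * z i ^ k) := by
          gcongr
          exact (hsub i).trans (mul_le_mul_of_nonneg_right hlam (pow_pos (hzpos i) k).le)
      _ = R * ((z a)⁻¹ ^ k * z i ^ k) := by ring
  have hvb : z b / z a ≤ C p := by
    refine le_trans ?_ ((hbound (a, b) v (fun i => zero_le_one.trans (hv i)) (fun i j hij => ?_)
      (by simp [v, hza.ne'])).trans (hp (a, b)))
    · simp [v, div_eq_inv_mul]
    · rw [div_mul_eq_mul_div, div_le_iff₀ hR, mul_comm _ R]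
      exact mul_le_of_realArc hM hcM hv hvsub hij
  calc (Fintype.card ι * C p)⁻¹ = (Fintype.card ι : ℝ)⁻¹ / C p := by rw [mul_inv, div_eq_mul_inv]
    _ ≤ z b / C p := div_le_div_of_nonneg_right hb (hC p).le
    _ ≤ z a := by rw [div_le_iff₀ (hC p)]; rwa [div_le_iff₀ hza, mul_comm] at hvb
    _ ≤ z i := ha i

lemma IsPerronPair.of_tendsto {P : ℕ → RealTensor ι k} {xs : ℕ → ι → ℝ} {lams : ℕ → ℝ}
    (hP : ∀ j, IsPerronPair (P j) (xs j) (lams j)) (hMP : ∀ j, M ≤ P j)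
    (hPt : Tendsto P atTop (𝓝 M)) (hxt : Tendsto xs atTop (𝓝 x))
    (hlt : Tendsto lams atTop (𝓝 lam)) : IsPerronPair M x lam where
  mem_stdSimplex := (isClosed_stdSimplex ℝ ι).mem_of_tendsto hxt
    (.of_forall fun j => (hP j).mem_stdSimplex)
  nonneg := ge_of_tendsto hlt (.of_forall fun j => (hP j).nonneg)
  eig i := tendsto_nhds_unique (((continuous_rApp i).tendsto (M, x)).comp (hPt.prodMk_nhds hxt))
    ((hlt.mul ((tendsto_pi_nhds.1 hxt i).pow k)).congr fun j => ((hP j).eig i).symm)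
  le_of_isSubEig μ u hu :=
    ge_of_tendsto hlt (.of_forall fun j => (hP j).le_of_isSubEig μ u (hu.mono_left (hMP j)))

theorem exists_isPerronPair [Nonempty ι] (hk : k ≠ 0) (hM : 0 ≤ M) :
    ∃ x lam, IsPerronPair M x lam ∧ ((∀ a b, ReflTransGen (RealArc M) a b) → ∀ i, 0 < x i) := by
  set ε : ℕ → ℝ := fun j => 1 / ((j : ℝ) + 1)
  have hε : ∀ j, 0 < ε j := fun j => by positivity
  set P : ℕ → RealTensor ι k := fun j i f => M i f + ε j
  have hMP : ∀ j, M ≤ P j := fun j i f => le_add_of_nonneg_right (hε j).le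
  choose xs lams hPF hpos using fun j =>
    exists_isPerronPair_of_pos hk fun i f => add_pos_of_nonneg_of_pos (hM i f) (hε j)
  set R := ∑ i, ∑ f, (M i f + 1)
  have hlamR : ∀ j, lams j ≤ R := fun j => by
    refine (IsSubEig.le_sum (fun i f => (hM i f).trans (hMP j i f))
      ⟨(hPF j).mem_stdSimplex.1, ne_zero_of_mem_stdSimplex (hPF j).mem_stdSimplex,
        fun i => ((hPF j).eig i).ge⟩).trans (sum_le_sum fun i _ => sum_le_sum fun f _ => ?_)
    simpa [P, ε] using inv_le_one_of_one_le₀ (by simp : (1 : ℝ) ≤ j + 1)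
  obtain ⟨⟨x, lam⟩, -, φ, hφ, hlim⟩ :=
    ((isCompact_stdSimplex ℝ ι).prod isCompact_Icc).tendsto_subseq fun j => (⟨(hPF j).mem_stdSimplex, (hPF j).nonneg, hlamR j⟩ :
      (xs j, lams j) ∈ stdSimplex ℝ ι ×ˢ Set.Icc 0 R)
  have hxt : Tendsto (xs ∘ φ) atTop (𝓝 x) := (continuous_fst.tendsto _).comp hlim
  have hPt : Tendsto (P ∘ φ) atTop (𝓝 M) := by
    refine tendsto_pi_nhds.2 fun i => tendsto_pi_nhds.2 fun f => ?_
    simpa [P, ε] using (tendsto_const_nhds (x := M i f)).add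
      ((tendsto_one_div_add_atTop_nhds_zero_nat (𝕜 := ℝ)).comp hφ.tendsto_atTop)
  refine ⟨x, lam, .of_tendsto (fun j => hPF (φ j)) (fun j => hMP (φ j)) hPt hxt
    ((continuous_snd.tendsto _).comp hlim), fun hirr i => ?_⟩
  obtain ⟨δ, hδ, hlow⟩ := exists_pos_le_of_weaklyIrreducible hM hirr (add_pos_of_nonneg_of_pos
    ((hPF 0).nonneg.trans (hlamR 0)) one_pos)
  refine hδ.trans_le (ge_of_tendsto (tendsto_pi_nhds.1 hxt i) (.of_forall fun j => ?_))
  refine hlow _ (lams (φ j)) (hPF (φ j)).mem_stdSimplex (hpos (φ j)) (by linarith [hlamR (φ j)])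
    (fun l => ?_) i
  rw [← (hPF (φ j)).eig l]
  exact rApp_mono_left (hMP (φ j)) (hPF (φ j)).mem_stdSimplex.1 l

lemma eq_of_prod_eq_prod {α : Type*} [Fintype α] {a b : α → ℝ} (ha : 0 ≤ a) (hab : a ≤ b)
    (hb : ∀ j, 0 < b j) (h : ∏ j, a j = ∏ j, b j) (j : α) : a j = b j := by
  have hapos : ∀ j, 0 < a j := fun j => (ha j).lt_of_ne fun h0 =>
    (prod_pos fun j _ => hb j).ne' (by rw [← h]; exact prod_eq_zero (mem_univ j) h0.symm)
  by_contra hne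
  exact (prod_lt_prod (fun i _ => hapos i) (fun i _ => hab i)
    ⟨j, mem_univ j, (hab j).lt_of_ne hne⟩).ne h

/-- Equality in `λ u^{[k]} ≤ M u^k ≤ M (s x)^k = λ (s x)^{[k]}` at `i` forces equality of every
factor `u (f j) ≤ s x (f j)` in every nonzero term of row `i`. -/
lemma eq_smul_of_realArc (hM : 0 ≤ M) (hx : ∀ i, 0 < x i)
    (heig : ∀ i, rApp M x i = lam * x i ^ k) (hu : 0 ≤ u) (hs : 0 < s) (hus : u ≤ s • x)
    {i j : ι} (hsub : lam * u i ^ k ≤ rApp M u i) (hi : u i = (s • x) i) (hij : RealArc M i j) :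
    u j = (s • x) j := by
  obtain ⟨f, hf, l, rfl⟩ := hij
  have hsx : ∀ j, 0 < (s • x) j := fun j => mul_pos hs (hx j)
  have hle : ∀ g, M i g * ∏ j, u (g j) ≤ M i g * ∏ j, (s • x) (g j) := fun g =>
    mul_le_mul_of_nonneg_left (prod_le_prod (fun j _ => hu _) fun j _ => hus _) (hM i g)
  have hsum : rApp M u i = rApp M (s • x) i := by
    refine le_antisymm (sum_le_sum fun g _ => hle g) ?_
    calc rApp M (s • x) i = lam * (s • x) i ^ k := by
          rw [rApp_smul, heig, Pi.smul_apply, smul_eq_mul, mul_pow]; ring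
      _ ≤ rApp M u i := hi ▸ hsub
  exact eq_of_prod_eq_prod (a := fun j => u (f j)) (fun _ => hu _) (fun _ => hus _) (fun _ => hsx _)
    (mul_left_cancel₀ hf ((sum_eq_sum_iff_of_le fun g _ => hle g).1 hsum f (mem_univ f))) l

/-- Take `s` maximal with `u ≤ s x`; the set where `u = s x` is closed under arcs. -/
theorem eq_smul_of_isSubEig (hM : 0 ≤ M) (hirr : ∀ a b, ReflTransGen (RealArc M) a b)
    (hx : ∀ i, 0 < x i) (heig : ∀ i, rApp M x i = lam * x i ^ k) (hu : IsSubEig M lam u) :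
    ∃ s : ℝ, 0 < s ∧ u = s • x := by
  obtain ⟨j, hj⟩ := hu.exists_pos
  have : Nonempty ι := ⟨j⟩
  obtain ⟨a, ha⟩ := Finite.exists_max fun i => u i / x i
  have hus : u ≤ (u a / x a) • x := fun j => by
    simpa [div_le_iff₀ (hx j)] using ha j
  have hs : 0 < u a / x a := pos_of_mul_pos_left (hj.trans_le (hus j)) (hx j).le
  refine ⟨u a / x a, hs, funext fun j => ?_⟩
  induction hirr a j with
  | refl => simp [(hx a).ne']
  | tail _ hbc ih => exact eq_smul_of_realArc hM hx heig hu.1 hs hus (hu.2.2 _) ih hbc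

open scoped ComplexOrder in
lemma eq_ofReal_of_sum_mul_eq {α : Type*} [Fintype α] {w : α → ℂ} {a p : α → ℝ}
    (hw : ∀ g, ‖w g‖ ≤ a g) (hp : ∀ g, 0 < p g)
    (h : ∑ g, w g * (p g : ℂ) = ((∑ g, a g * p g : ℝ) : ℂ)) (g : α) : w g = a g := by
  have hle : ∀ g, (w g).re * p g ≤ a g * p g := fun g =>
    mul_le_mul_of_nonneg_right ((Complex.re_le_norm _).trans (hw g)) (hp g).le
  have hsum : ∑ g, (w g).re * p g = ∑ g, a g * p g := by simpa using congrArg Complex.re h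
  have hre : (w g).re = a g := mul_right_cancel₀ (hp g).ne'
    ((sum_eq_sum_iff_of_le fun g _ => hle g).1 hsum g (mem_univ g))
  have hnonneg : 0 ≤ w g := Complex.re_eq_norm.1 (le_antisymm (Complex.re_le_norm _) (hre ▸ hw g))
  exact Complex.ext (by simpa using hre) (by simpa using (Complex.nonneg_iff.1 hnonneg).2.symm)

lemma eigenvalues_eq_empty [IsEmpty ι] (A : Tensor ι m) : Eigenvalues A = ∅ :=
  Set.eq_empty_of_forall_notMem fun _ ⟨x, hx, _⟩ => hx (Subsingleton.elim x 0)

lemma norm_tApp_le (C : Tensor ι m) (w : ι → ℂ) (i : ι) :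
    ‖tApp C w i‖ ≤ rApp (fun i f => ‖C i f‖) (fun j => ‖w j‖) i :=
  (norm_sum_le _ _).trans_eq (sum_congr rfl fun f _ => by rw [norm_mul, norm_prod])

section Dominated

variable {A C : Tensor ι m} {M : RealTensor ι (m - 1)}

lemma IsEigPair.isSubEig {l : ℂ} {w : ι → ℂ} (h : IsEigPair C l w)
    (hCM : ∀ i f, ‖C i f‖ ≤ M i f) : IsSubEig M ‖l‖ fun j => ‖w j‖ := by
  refine ⟨fun j => norm_nonneg _, fun h0 => h.1 (funext fun j => norm_eq_zero.1 (congrFun h0 j)),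
    fun i => ?_⟩
  calc ‖l‖ * ‖w i‖ ^ (m - 1) = ‖tApp C w i‖ := by rw [h.2 i, norm_mul, norm_pow]
    _ ≤ _ := (norm_tApp_le C w i).trans (rApp_mono_left hCM (fun j => norm_nonneg _) i)

lemma norm_le_of_isPerronPair (hP : IsPerronPair M x lam) (hCM : ∀ i f, ‖C i f‖ ≤ M i f)
    {l : ℂ} (hl : l ∈ Eigenvalues C) : ‖l‖ ≤ lam :=
  let ⟨_, hw⟩ := hl
  hP.le_of_isSubEig _ _ (hw.isSubEig hCM)

lemma specRad_le_of_isPerronPair (hP : IsPerronPair M x lam)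
    (hCM : ∀ i f, ‖C i f‖ ≤ M i f) : specRad C ≤ lam :=
  Real.sSup_le (by rintro _ ⟨l, hl, rfl⟩; exact norm_le_of_isPerronPair hP hCM hl) hP.nonneg

lemma specRad_eq_of_isPerronPair (hM : 0 ≤ M) (hP : IsPerronPair M x lam)
    (hAM : ∀ i f, A i f = M i f) : specRad A = lam := by
  refine IsGreatest.csSup_eq ⟨⟨lam, ⟨fun j => x j, fun h0 => ?_, fun i => ?_⟩, by
    simp [hP.nonneg]⟩, ?_⟩
  · exact ne_zero_of_mem_stdSimplex hP.mem_stdSimplex (funext fun j => by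
      simpa using congrFun h0 j)
  · have : tApp A (fun j => (x j : ℂ)) i = rApp M x i := by simp [tApp, rApp, hAM]
    rw [this, hP.eig]
    push_cast
    rfl
  · rintro _ ⟨l, hl, rfl⟩
    exact norm_le_of_isPerronPair hP (fun i f => by simp [hAM, abs_of_nonneg (hM i f)]) hl

theorem eq_diagConj_of_isEigPair {B : Tensor ι m} (hM : 0 ≤ M)
    (hirr : ∀ a b, ReflTransGen (RealArc M) a b) (hP : IsPerronPair M x lam) (hx : ∀ i, 0 < x i)
    (hAM : ∀ i f, A i f = M i f) (hBM : ∀ i f, ‖B i f‖ ≤ M i f) {θ : ℝ} {y : ι → ℂ}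
    (hy : IsEigPair B ((lam : ℂ) * Complex.exp (θ * Complex.I)) y) :
    (∀ i, y i ≠ 0) ∧ ∀ i f, A i f = Complex.exp (-θ * Complex.I) *
      diagConj (fun i => y i / (‖y i‖ : ℂ)) B i f := by
  set u : ι → ℝ := fun j => ‖y j‖
  have hu : IsSubEig M lam u := by
    simpa [norm_mul, Complex.norm_exp_ofReal_mul_I, abs_of_nonneg hP.nonneg] using
      hy.isSubEig hBM
  obtain ⟨s, hs, hus⟩ := eq_smul_of_isSubEig hM hirr hx hP.eig hu
  have hupos : ∀ i, 0 < u i := fun i => by rw [hus]; exact mul_pos hs (hx i)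
  have hyne : ∀ i, y i ≠ 0 := fun i => norm_pos_iff.1 (hupos i)
  have hueig : ∀ i, rApp M u i = lam * u i ^ (m - 1) := fun i => by
    rw [hus, rApp_smul, hP.eig, Pi.smul_apply, smul_eq_mul, mul_pow]; ring
  refine ⟨hyne, fun i f => ?_⟩
  set d : ι → ℂ := fun i => y i / (‖y i‖ : ℂ)
  have hd : ∀ j, ‖d j‖ = 1 := fun j => by simp [d, (hyne j)]
  have hyd : ∀ j, y j = u j * d j := fun j => by
    simp [d, u, mul_div_cancel₀ _ (Complex.ofReal_ne_zero.2 (norm_ne_zero_iff.2 (hyne j)))]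
  have hdi : d i ≠ 0 := fun h => by simpa [h] using hd i
  have hexp : Complex.exp (-θ * Complex.I) * Complex.exp (θ * Complex.I) = 1 := by
    rw [← Complex.exp_add]; simp
  clear_value u d
  refine (hAM i f).trans (eq_ofReal_of_sum_mul_eq (a := M i) (p := fun g => ∏ j, u (g j))
    (w := fun g => Complex.exp (-θ * Complex.I) * diagConj d B i g)
    (fun g => ?_) (fun g => prod_pos fun j _ => hupos _) ?_ f).symm
  · simp [diagConj, norm_prod, hd, Complex.norm_exp, hBM i g]
  · calc ∑ g, Complex.exp (-θ * Complex.I) * diagConj d B i g * ((∏ j, u (g j) : ℝ) : ℂ)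
        = Complex.exp (-θ * Complex.I) * (d i)⁻¹ ^ (m - 1) * tApp B y i := by
          rw [tApp, mul_sum]
          refine sum_congr rfl fun g _ => ?_
          simp only [diagConj, hyd, prod_mul_distrib]
          push_cast
          ring
      _ = (Complex.exp (-θ * Complex.I) * Complex.exp (θ * Complex.I)) *
            ((d i)⁻¹ ^ (m - 1) * d i ^ (m - 1)) * (lam * u i ^ (m - 1) : ℝ) := by
          rw [hy.2 i, hyd i]; push_cast; ring
      _ = ((∑ g, M i g * ∏ j, u (g j) : ℝ) : ℂ) := by
          rw [hexp, ← mul_pow, inv_mul_cancel₀ hdi, one_pow, one_mul, one_mul, ← hueig]; rfl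

end Dominated

/-- Yang–Yang: if `|B| ≤ A` entrywise with `A` nonnegative then `ρ(B) ≤ ρ(A)`; and if `A` is
weakly irreducible with `ρ(B) = ρ(A)` and `λ = ρ(A)e^{iθ}` is an eigenvalue of `B` with
eigenvector `y`, then `y` has no zero entry and `A = e^{-iθ} D^{-(m-1)} B D` with
`D = diag(yᵢ/|yᵢ|)`. -/
theorem stmt4 {n m : ℕ} (hm : 2 ≤ m) (A B : Tensor (Fin n) m)
    (hA : Nonneg A) (hle : ∀ i f, ‖B i f‖ ≤ (A i f).re) :
    specRad B ≤ specRad A ∧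
    (WeaklyIrreducible A → specRad B = specRad A →
      ∀ (θ : ℝ) (y : Fin n → ℂ),
        IsEigPair B (((specRad A : ℝ) : ℂ) * Complex.exp ((θ : ℂ) * Complex.I)) y →
        (∀ i, y i ≠ 0) ∧
        ∀ i f, A i f = Complex.exp (-(θ : ℂ) * Complex.I) *
          diagConj (fun i => y i / (‖y i‖ : ℂ)) B i f) := by
  rcases isEmpty_or_nonempty (Fin n) with hn | hn
  · exact ⟨by simp [specRad, eigenvalues_eq_empty],
      fun _ _ _ y hy => absurd (Subsingleton.elim y 0) hy.1⟩
  set M : RealTensor (Fin n) (m - 1) := fun i f => (A i f).re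
  have hAM : ∀ i f, A i f = M i f := fun i f => by
    obtain ⟨r, -, hr⟩ := hA i f
    simp [M, hr]
  have hM : 0 ≤ M := fun i f => by
    obtain ⟨r, hr0, hr⟩ := hA i f
    simpa [M, hr] using hr0
  obtain ⟨x, lam, hP, hpos⟩ := exists_isPerronPair (by omega) hM
  have hρA := specRad_eq_of_isPerronPair hM hP hAM
  refine ⟨hρA ▸ specRad_le_of_isPerronPair hP hle, fun hirr _ θ y hy => ?_⟩
  have hirrM : ∀ a b, ReflTransGen (RealArc M) a b := fun a b =>
    ReflTransGen.mono (fun a b ⟨f, hf, hb⟩ => ⟨f, by simpa [hAM] using hf, hb⟩) a b (hirr a b)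
  rw [hρA] at hy
  exact eq_diagConj_of_isEigPair hM hirrM hP (hpos hirrM) hAM hle hy

end PaperTensor
end

section
/- Let A be a nonnegative irreducible tensor of order m and dimension n, and suppose the solid graph G^s(A) is weakly connected (connected when arc directions are ignored). If x is an eigenvector of A corresponding to ρ(A) and D_x = diag(x₁/|x₁|, …, x_n/|x_n|), then x^{[m-1]} = e^{iθ} |x|^{[m-1]} for some real θ, i.e. D_x^{m-1} = e^{iθ} I. -/
/-!
Write `ρ = ρ(A)` and `|x|` for the vector of moduli. The triangle inequality gives
`ρ |x|^{[m-1]} ≤ A |x|^{m-1}` entrywise. By a Collatz–Wielandt argument this must be an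
equality: the largest `t` with `t z^{[m-1]} ≤ A z^{m-1}` for some `z` in the simplex is attained
(compactness) and is an eigenvalue, since irreducibility lets one perturb any `z` with a strict
inequality somewhere into one with strict inequalities everywhere, so that `t` can be raised.
Hence the triangle inequality is an equality in every row, so all terms
`a_{i i₂…i_m} x_{i₂} ⋯ x_{i_m}` with nonzero coefficient point in the direction of
`ρ x_i^{m-1}`. For a solid arc `(i, j)` this term is `a_{ij…j} x_j^{m-1}`, so `x_i^{m-1}` and
`x_j^{m-1}` have the same argument (all `x_i ≠ 0` by irreducibility), and weak connectivity of
`G^s(A)` spreads this common argument `θ` to every index.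
-/

open scoped BigOperators

open Filter Topology

theorem Finset.prod_lt_prod_of_nonneg {κ : Type*} {s : Finset κ} {f g : κ → ℝ}
    (hs : s.Nonempty) (hf : ∀ k ∈ s, 0 ≤ f k) (hfg : ∀ k ∈ s, f k < g k) :
    ∏ k ∈ s, f k < ∏ k ∈ s, g k := by
  by_cases hpos : ∀ k ∈ s, 0 < f k
  · exact Finset.prod_lt_prod_of_nonempty hpos hfg hs
  · push Not at hpos
    obtain ⟨k, hk, hk0⟩ := hpos
    rw [Finset.prod_eq_zero hk (le_antisymm hk0 (hf k hk))]
    exact Finset.prod_pos fun l hl => (hf l hl).trans_lt (hfg l hl)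

theorem exists_pos_forall_lt {κ : Type*} [Finite κ] {p : κ → Prop} {f : κ → ℝ → ℝ}
    {g : κ → ℝ} (hf : ∀ k, ContinuousAt (f k) 0) (h : ∀ k, p k → f k 0 < g k) :
    ∃ ε > 0, ∀ k, p k → f k ε < g k := by
  have hev : ∀ᶠ ε in 𝓝 (0 : ℝ), ∀ k, p k → f k ε < g k :=
    eventually_all.2 fun k => eventually_imp_distrib_left.2 fun hk =>
      (hf k).eventually_lt continuousAt_const (h k hk)
  obtain ⟨ε, hε, hpos⟩ :=
    ((hev.filter_mono nhdsWithin_le_nhds).and (self_mem_nhdsWithin (s := Set.Ioi 0))).exists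
  exact ⟨ε, hpos, hε⟩

theorem sameRay_of_norm_sum_eq_sum_norm {E κ : Type*} [NormedAddCommGroup E] [NormedSpace ℝ E]
    [StrictConvexSpace ℝ E] {s : Finset κ} {c : κ → E}
    (h : ‖∑ k ∈ s, c k‖ = ∑ k ∈ s, ‖c k‖) {k : κ} (hk : k ∈ s) :
    SameRay ℝ (c k) (∑ l ∈ s, c l) := by
  classical
  rw [← Finset.add_sum_erase s c hk] at h ⊢
  rw [← Finset.add_sum_erase s (‖c ·‖) hk] at h
  have hrest : ‖∑ l ∈ s.erase k, c l‖ = ∑ l ∈ s.erase k, ‖c l‖ := by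
    have := norm_add_le (c k) (∑ l ∈ s.erase k, c l)
    have := norm_sum_le (s.erase k) c
    linarith
  exact SameRay.rfl.add_right (sameRay_iff_norm_add.2 (by rw [h, hrest]))

namespace PaperTensor

variable {ι : Type} {m : ℕ} {A : Tensor ι m}

theorem Nonneg.re_nonneg (hA : Nonneg A) (i : ι) (f : Fin (m - 1) → ι) : 0 ≤ (A i f).re := by
  obtain ⟨r, hr, he⟩ := hA i f
  simpa [he] using hr

theorem Nonneg.ofReal_re (hA : Nonneg A) (i : ι) (f : Fin (m - 1) → ι) :
    ((A i f).re : ℂ) = A i f := by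
  obtain ⟨r, -, he⟩ := hA i f
  simp [he]

theorem Nonneg.re_pos (hA : Nonneg A) {i : ι} {f : Fin (m - 1) → ι} (hf : A i f ≠ 0) :
    0 < (A i f).re :=
  (hA.re_nonneg i f).lt_of_ne fun h => hf (by rw [← hA.ofReal_re, ← h, Complex.ofReal_zero])

theorem norm_mul_prod (hA : Nonneg A) (x : ι → ℂ) (i : ι) (f : Fin (m - 1) → ι) :
    ‖A i f * ∏ j, x (f j)‖ = (A i f).re * ∏ j, ‖x (f j)‖ := by
  rw [norm_mul, norm_prod, ← hA.ofReal_re i f, Complex.norm_of_nonneg (hA.re_nonneg i f),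
    Complex.ofReal_re]

variable [Fintype ι]

/-- `A z^{m-1}` for a real vector `z`; for nonnegative `A` the real parts are the entries. -/
noncomputable def reApp (A : Tensor ι m) (z : ι → ℝ) (i : ι) : ℝ :=
  ∑ f : Fin (m - 1) → ι, (A i f).re * ∏ j, z (f j)

def SubEigen (A : Tensor ι m) (t : ℝ) (z : ι → ℝ) : Prop :=
  ∀ i, t * z i ^ (m - 1) ≤ reApp A z i

theorem reApp_nonneg (hA : Nonneg A) {z : ι → ℝ} (hz : 0 ≤ z) (i : ι) : 0 ≤ reApp A z i :=
  Finset.sum_nonneg fun f _ => mul_nonneg (hA.re_nonneg i f)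
    (Finset.prod_nonneg fun j _ => hz (f j))

theorem reApp_mono (hA : Nonneg A) {z w : ι → ℝ} (hz : 0 ≤ z) (hzw : z ≤ w) (i : ι) :
    reApp A z i ≤ reApp A w i :=
  Finset.sum_le_sum fun f _ => mul_le_mul_of_nonneg_left
    (Finset.prod_le_prod (fun j _ => hz (f j)) (fun j _ => hzw (f j))) (hA.re_nonneg i f)

theorem reApp_lt_reApp (hm : 2 ≤ m) (hA : Nonneg A) {z w : ι → ℝ} (hz : 0 ≤ z) (hzw : z ≤ w)
    {i : ι} {f : Fin (m - 1) → ι} (hf : A i f ≠ 0) (hlt : ∀ j, z (f j) < w (f j)) :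
    reApp A z i < reApp A w i :=
  Finset.sum_lt_sum (fun g _ => mul_le_mul_of_nonneg_left
      (Finset.prod_le_prod (fun j _ => hz (g j)) (fun j _ => hzw (g j))) (hA.re_nonneg i g))
    ⟨f, Finset.mem_univ _, mul_lt_mul_of_pos_left (Finset.prod_lt_prod_of_nonneg
      ⟨⟨0, by omega⟩, Finset.mem_univ _⟩ (fun j _ => hz (f j)) fun j _ => hlt j) (hA.re_pos hf)⟩

theorem term_le_reApp (hA : Nonneg A) {z : ι → ℝ} (hz : 0 ≤ z) (i : ι)
    (f : Fin (m - 1) → ι) : (A i f).re * ∏ j, z (f j) ≤ reApp A z i :=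
  Finset.single_le_sum (f := fun f => (A i f).re * ∏ j, z (f j))
    (fun g _ => mul_nonneg (hA.re_nonneg i g) (Finset.prod_nonneg fun j _ => hz (g j)))
    (Finset.mem_univ f)

theorem reApp_pos (hA : Nonneg A) {z : ι → ℝ} (hz : 0 ≤ z) {i : ι} {f : Fin (m - 1) → ι}
    (hf : A i f ≠ 0) (hpos : ∀ j, 0 < z (f j)) : 0 < reApp A z i :=
  lt_of_lt_of_le (mul_pos (hA.re_pos hf) (Finset.prod_pos fun j _ => hpos j))
    (term_le_reApp hA hz i f)

theorem reApp_smul (A : Tensor ι m) (c : ℝ) (z : ι → ℝ) (i : ι) :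
    reApp A (c • z) i = c ^ (m - 1) * reApp A z i := by
  simp only [reApp, Finset.mul_sum, Pi.smul_apply, smul_eq_mul, Finset.prod_mul_distrib,
    Finset.prod_const, Finset.card_univ, Fintype.card_fin]
  exact Finset.sum_congr rfl fun f _ => by ring

theorem continuous_reApp (A : Tensor ι m) (i : ι) : Continuous fun z : ι → ℝ => reApp A z i := by
  unfold reApp
  fun_prop

theorem norm_tApp_le_s12 (hA : Nonneg A) (x : ι → ℂ) (i : ι) :
    ‖tApp A x i‖ ≤ reApp A (‖x ·‖) i :=
  (norm_sum_le _ _).trans_eq (Finset.sum_congr rfl fun f _ => norm_mul_prod hA x i f)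

theorem tApp_ofReal (hA : Nonneg A) (z : ι → ℝ) (i : ι) :
    tApp A (fun j => (z j : ℂ)) i = reApp A z i := by
  simp only [tApp, reApp, Complex.ofReal_sum, Complex.ofReal_mul, Complex.ofReal_prod,
    hA.ofReal_re]

theorem IsEigPair.subEigen_norm {l : ℂ} {x : ι → ℂ} (hx : IsEigPair A l x) (hA : Nonneg A) :
    SubEigen A ‖l‖ (‖x ·‖) := fun i => by
  simpa only [norm_mul, norm_pow, hx.2 i] using norm_tApp_le_s12 hA x i

theorem SubEigen.le_sum_re (hA : Nonneg A) {t : ℝ} {z : ι → ℝ} (h : SubEigen A t z)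
    (hz0 : 0 ≤ z) (hz : z ≠ 0) : t ≤ ∑ i, ∑ f, (A i f).re := by
  have : Nonempty ι := by
    by_contra hι
    exact hz (funext fun i => (hι ⟨i⟩).elim)
  obtain ⟨i, hi⟩ := Finite.exists_max z
  have hzi : 0 < z i := by
    obtain ⟨k, hk⟩ := Function.ne_iff.1 hz
    exact ((hz0 k).lt_of_ne' hk).trans_le (hi k)
  have hrow : reApp A z i ≤ (∑ f, (A i f).re) * z i ^ (m - 1) := by
    rw [Finset.sum_mul]
    refine Finset.sum_le_sum fun f _ => mul_le_mul_of_nonneg_left ?_ (hA.re_nonneg i f)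
    exact (Finset.prod_le_prod (g := fun _ => z i) (fun j _ => hz0 (f j))
      (fun j _ => hi (f j))).trans_eq (by simp)
  have hsum : ∑ f, (A i f).re ≤ ∑ i, ∑ f, (A i f).re :=
    Finset.single_le_sum (f := fun i => ∑ f, (A i f).re)
      (fun k _ => Finset.sum_nonneg fun f _ => hA.re_nonneg k f) (Finset.mem_univ i)
  exact hsum.trans' (le_of_mul_le_mul_right ((h i).trans hrow) (pow_pos hzi _))

theorem bddAbove_norm_eigenvalues (hA : Nonneg A) :
    BddAbove ((fun z : ℂ => ‖z‖) '' Eigenvalues A) := by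
  refine ⟨∑ i, ∑ f, (A i f).re, ?_⟩
  rintro _ ⟨l, ⟨x, hx⟩, rfl⟩
  exact (hx.subEigen_norm hA).le_sum_re hA (fun i => norm_nonneg _)
    fun h => hx.1 (funext fun i => norm_eq_zero.1 (congrFun h i))

theorem specRad_nonneg (A : Tensor ι m) : 0 ≤ specRad A :=
  Real.sSup_nonneg fun _ ⟨_, _, h⟩ => h ▸ norm_nonneg _

def tightSet (A : Tensor ι m) (t : ℝ) (z : ι → ℝ) : Set ι :=
  {i | reApp A z i ≤ t * z i ^ (m - 1)}

theorem exists_subEigen_tightSet_ssubset (hm : 2 ≤ m) (hA : Nonneg A) (hirr : Irred A)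
    {t : ℝ} {z : ι → ℝ} (hz0 : 0 ≤ z) (hz : SubEigen A t z)
    (hne : (tightSet A t z).Nonempty) (hne_univ : tightSet A t z ≠ Set.univ) :
    ∃ w, 0 ≤ w ∧ SubEigen A t w ∧ tightSet A t w ⊂ tightSet A t z := by
  classical
  set S := tightSet A t z
  obtain ⟨i₀, hi₀, f₀, hf₀, hAf₀⟩ :
      ∃ i₀ ∈ S, ∃ f₀ : Fin (m - 1) → ι, (∀ j, f₀ j ∉ S) ∧ A i₀ f₀ ≠ 0 := by
    by_contra! h
    exact hirr ⟨S, hne, hne_univ, h⟩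
  -- Raising `z` by a small `ε` off `S` keeps the strict rows strict and makes row `i₀` strict.
  obtain ⟨ε, hε, hεS⟩ := exists_pos_forall_lt (p := (· ∉ S))
    (f := fun j ε => t * (z j + ε) ^ (m - 1)) (by fun_prop)
    (fun j hj => by simpa [S, tightSet] using hj)
  set w : ι → ℝ := fun j => if j ∈ S then z j else z j + ε
  have hzw : z ≤ w := fun j => by by_cases hj : j ∈ S <;> simp [w, hj, hε.le]
  have hw0 : 0 ≤ w := hz0.trans hzw
  have hmono := reApp_mono hA hz0 hzw
  have hstrict : ∀ j ∉ S, t * w j ^ (m - 1) < reApp A w j := fun j hj => by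
    simpa [w, hj] using (hεS j hj).trans_le (hmono j)
  have hi₀_strict : reApp A z i₀ < reApp A w i₀ :=
    reApp_lt_reApp hm hA hz0 hzw hAf₀ fun j => by simpa [w, hf₀ j] using hε
  have hwS : ∀ j ∈ S, w j = z j := fun j hj => if_pos hj
  refine ⟨w, hw0, fun j => ?_, ?_⟩
  · by_cases hj : j ∈ S
    · rw [hwS j hj]
      exact (hz j).trans (hmono j)
    · exact (hstrict j hj).le
  · have hsub : tightSet A t w ⊆ S := fun j hj => by_contra fun hjS => (hstrict j hjS).not_ge hj
    refine (Set.ssubset_iff_of_subset hsub).2 ⟨i₀, hi₀, ?_⟩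
    change ¬ reApp A w i₀ ≤ t * w i₀ ^ (m - 1)
    rw [not_le, hwS i₀ hi₀]
    exact (hz i₀).trans_lt hi₀_strict

theorem exists_tightSet_eq_empty (hm : 2 ≤ m) (hA : Nonneg A) (hirr : Irred A) {t : ℝ}
    {z : ι → ℝ} (hz0 : 0 ≤ z) (hz : SubEigen A t z) (hne_univ : tightSet A t z ≠ Set.univ) :
    ∃ w, 0 ≤ w ∧ tightSet A t w = ∅ := by
  suffices ∀ S : Set ι, ∀ z, 0 ≤ z → SubEigen A t z → tightSet A t z = S → S ≠ Set.univ →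
      ∃ w, 0 ≤ w ∧ tightSet A t w = ∅ from this _ z hz0 hz rfl hne_univ
  intro S
  induction S using WellFoundedLT.induction with
  | _ S ih =>
    rintro z hz0 hz rfl hne_univ
    obtain hS | hS := (tightSet A t z).eq_empty_or_nonempty
    · exact ⟨z, hz0, hS⟩
    obtain ⟨w, hw0, hw, hwz⟩ := exists_subEigen_tightSet_ssubset hm hA hirr hz0 hz hS hne_univ
    exact ih _ hwz w hw0 hw rfl (hwz.trans_le (Set.subset_univ _)).ne

theorem exists_subEigen_gt (hm : 2 ≤ m) (hA : Nonneg A) (hirr : Irred A) {t : ℝ}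
    {z : ι → ℝ} (hz0 : 0 ≤ z) (hz : SubEigen A t z) (hne_univ : tightSet A t z ≠ Set.univ) :
    ∃ t' > t, ∃ w, 0 ≤ w ∧ w ≠ 0 ∧ SubEigen A t' w := by
  obtain ⟨w, hw0, hw⟩ := exists_tightSet_eq_empty hm hA hirr hz0 hz hne_univ
  have hstrict : ∀ i, t * w i ^ (m - 1) < reApp A w i := fun i =>
    not_le.1 fun h => (Set.eq_empty_iff_forall_notMem.1 hw) i h
  obtain ⟨ε, hε, hεw⟩ := exists_pos_forall_lt (p := fun _ => True)
    (f := fun i ε => (t + ε) * w i ^ (m - 1)) (by fun_prop) (fun i _ => by simpa using hstrict i)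
  refine ⟨t + ε, by linarith, w, hw0, ?_, fun i => (hεw i trivial).le⟩
  rintro rfl
  obtain ⟨i, -⟩ := Set.nonempty_compl.2 hne_univ
  have hm1 : m - 1 ≠ 0 := by omega
  simpa [reApp, hm1] using hstrict i

theorem SubEigen.smul {t : ℝ} {z : ι → ℝ} (h : SubEigen A t z) {c : ℝ} (hc : 0 ≤ c) :
    SubEigen A t (c • z) := fun i => by
  rw [reApp_smul, Pi.smul_apply, smul_eq_mul, mul_pow, mul_left_comm]
  exact mul_le_mul_of_nonneg_left (h i) (pow_nonneg hc _)

theorem exists_forall_subEigen_le [Nonempty ι] (hA : Nonneg A) :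
    ∃ r z, 0 ≤ z ∧ z ≠ 0 ∧ SubEigen A r z ∧
      ∀ t w, 0 ≤ w → w ≠ 0 → SubEigen A t w → t ≤ r := by
  classical
  set K : Set (ℝ × (ι → ℝ)) :=
    (Set.Icc 0 (∑ i, ∑ f, (A i f).re) ×ˢ stdSimplex ℝ ι) ∩ {p | SubEigen A p.1 p.2}
  have hK : IsCompact K := by
    refine (isCompact_Icc.prod (isCompact_stdSimplex ℝ ι)).inter_right ?_
    simp only [SubEigen, Set.ofPred_forall]
    exact isClosed_iInter fun i =>
      isClosed_le (by fun_prop) ((continuous_reApp A i).comp continuous_snd)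
  obtain ⟨i⟩ := ‹Nonempty ι›
  have hK0 : ((0 : ℝ), (Pi.single i 1 : ι → ℝ)) ∈ K := by
    refine ⟨⟨⟨le_rfl, ?_⟩, single_mem_stdSimplex ℝ i⟩, fun j => ?_⟩
    · exact Finset.sum_nonneg fun k _ => Finset.sum_nonneg fun f _ => hA.re_nonneg k f
    · simpa using reApp_nonneg hA (Pi.single_nonneg.2 zero_le_one) j
  obtain ⟨⟨r, z⟩, ⟨⟨hr, hz⟩, hrz⟩, hmax⟩ :=
    hK.exists_isMaxOn ⟨_, hK0⟩ continuous_fst.continuousOn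
  refine ⟨r, z, hz.1, fun h => by simpa [h] using hz.2, hrz, fun t w hw0 hw h => ?_⟩
  rcases lt_or_ge t 0 with ht | ht
  · exact ht.le.trans hr.1
  have hsum : 0 < ∑ j, w j := by
    obtain ⟨k, hk⟩ := Function.ne_iff.1 hw
    exact Finset.sum_pos' (fun j _ => hw0 j) ⟨k, Finset.mem_univ _, (hw0 k).lt_of_ne' hk⟩
  have hnorm : (∑ j, w j)⁻¹ • w ∈ stdSimplex ℝ ι :=
    ⟨fun j => mul_nonneg (inv_nonneg.2 hsum.le) (hw0 j), by
      simp [← Finset.mul_sum, inv_mul_cancel₀ hsum.ne']⟩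
  exact hmax (a := (t, (∑ j, w j)⁻¹ • w))
    ⟨⟨⟨ht, h.le_sum_re hA hw0 hw⟩, hnorm⟩, h.smul (inv_nonneg.2 hsum.le)⟩

theorem le_specRad_of_subEigen (hm : 2 ≤ m) (hA : Nonneg A) (hirr : Irred A) {t : ℝ}
    {w : ι → ℝ} (hw0 : 0 ≤ w) (hw : w ≠ 0) (h : SubEigen A t w) : t ≤ specRad A := by
  have : Nonempty ι := ⟨(Function.ne_iff.1 hw).choose⟩
  obtain ⟨r, z, hz0, hz, hrz, hmax⟩ := exists_forall_subEigen_le hA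
  have htight : tightSet A r z = Set.univ := by
    by_contra hne
    obtain ⟨t', ht', w', hw'0, hw', h'⟩ := exists_subEigen_gt hm hA hirr hz0 hrz hne
    exact (hmax t' w' hw'0 hw' h').not_gt ht'
  have heig : (r : ℂ) ∈ Eigenvalues A := by
    refine ⟨fun i => (z i : ℂ),
      fun h => hz (funext fun i => Complex.ofReal_eq_zero.1 (congrFun h i)), fun i => ?_⟩
    rw [tApp_ofReal hA, le_antisymm (htight ▸ Set.mem_univ i : i ∈ tightSet A r z) (hrz i)]
    push_cast
    rfl
  calc t ≤ r := hmax t w hw0 hw h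
    _ ≤ ‖(r : ℂ)‖ := by rw [Complex.norm_real, Real.norm_eq_abs]; exact le_abs_self r
    _ ≤ specRad A := le_csSup (bddAbove_norm_eigenvalues hA) ⟨_, heig, rfl⟩

theorem IsEigPair.reApp_norm_eq {x : ι → ℂ} (hx : IsEigPair A (specRad A : ℂ) x)
    (hm : 2 ≤ m) (hA : Nonneg A) (hirr : Irred A) (i : ι) :
    reApp A (‖x ·‖) i = specRad A * ‖x i‖ ^ (m - 1) := by
  have h := hx.subEigen_norm hA
  rw [Complex.norm_real, Real.norm_of_nonneg (specRad_nonneg A)] at h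
  have htight : tightSet A (specRad A) (‖x ·‖) = Set.univ := by
    by_contra hne
    obtain ⟨t', ht', w, hw0, hw, h'⟩ :=
      exists_subEigen_gt hm hA hirr (fun i => norm_nonneg _) h hne
    exact (le_specRad_of_subEigen hm hA hirr hw0 hw h').not_gt ht'
  exact le_antisymm (htight ▸ Set.mem_univ i : i ∈ tightSet A _ _) (h i)

theorem IsEigPair.apply_ne_zero {x : ι → ℂ} (hx : IsEigPair A (specRad A : ℂ) x)
    (hm : 2 ≤ m) (hA : Nonneg A) (hirr : Irred A) (i : ι) : x i ≠ 0 := by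
  intro hi
  refine hirr ⟨{j | x j = 0}, ⟨i, hi⟩, fun h => hx.1 (funext fun j => ?_), fun j hj f hf => ?_⟩
  · exact (h ▸ Set.mem_univ j : j ∈ {j | x j = 0})
  by_contra hAf
  have hpos := reApp_pos hA (fun _ => norm_nonneg _) hAf fun k => norm_pos_iff.2 (hf k)
  rw [hx.reApp_norm_eq hm hA hirr, (hj : x j = 0), norm_zero, zero_pow (by omega), mul_zero]
    at hpos
  exact hpos.false

theorem IsEigPair.arg_pow_eq_of_solidArc {x : ι → ℂ} (hx : IsEigPair A (specRad A : ℂ) x)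
    (hm : 2 ≤ m) (hA : Nonneg A) (hirr : Irred A) {i j : ι} (hij : SolidArc A i j) :
    (x j ^ (m - 1)).arg = (x i ^ (m - 1)).arg := by
  have hx0 := hx.apply_ne_zero hm hA hirr
  have hρ : 0 < specRad A := by
    have hpos := reApp_pos hA (fun _ => norm_nonneg _) hij fun _ => norm_pos_iff.2 (hx0 j)
    rw [hx.reApp_norm_eq hm hA hirr] at hpos
    exact pos_of_mul_pos_left hpos (pow_nonneg (norm_nonneg _) _)
  have hnorm : ‖∑ f, A i f * ∏ k, x (f k)‖ = ∑ f, ‖A i f * ∏ k, x (f k)‖ := by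
    simp only [norm_mul_prod hA]
    change ‖tApp A x i‖ = reApp A (‖x ·‖) i
    rw [hx.2 i, hx.reApp_norm_eq hm hA hirr, norm_mul, Complex.norm_real,
      Real.norm_of_nonneg hρ.le, norm_pow]
  have hray := sameRay_of_norm_sum_eq_sum_norm hnorm (Finset.mem_univ fun _ => j)
  have hterm : A i (fun _ => j) * ∏ k, x ((fun _ : Fin (m - 1) => j) k) =
      (A i fun _ => j).re • x j ^ (m - 1) := by
    simp [Complex.real_smul, hA.ofReal_re]
  have hsum : ∑ f, A i f * ∏ k, x (f k) = specRad A • x i ^ (m - 1) := by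
    rw [Complex.real_smul]
    exact hx.2 i
  rw [hterm, hsum] at hray
  have hray' := (hray.pos_smul_left (inv_pos.2 (hA.re_pos hij))).pos_smul_right (inv_pos.2 hρ)
  rw [inv_smul_smul₀ (hA.re_pos hij).ne', inv_smul_smul₀ hρ.ne'] at hray'
  rcases Complex.sameRay_iff.1 hray' with h | h | h
  · exact absurd h (pow_ne_zero _ (hx0 j))
  · exact absurd h (pow_ne_zero _ (hx0 i))
  · exact h

/-- If `A` is nonnegative irreducible and the solid graph `G^s(A)` is weakly connected,
then every eigenvector `x` for `ρ(A)` satisfies `x^{[m-1]} = e^{iθ}|x|^{[m-1]}`. -/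
theorem stmt12 {n m : ℕ} (hm : 2 ≤ m) (A : Tensor (Fin n) m)
    (hA : Nonneg A) (hirr : Irred A)
    (hconn : ∀ i j : Fin n,
      Relation.ReflTransGen (fun a b => SolidArc A a b ∨ SolidArc A b a) i j)
    (x : Fin n → ℂ) (hx : IsEigPair A ((specRad A : ℝ) : ℂ) x) :
    ∃ θ : ℝ, ∀ i, x i ^ (m - 1) =
      Complex.exp ((θ : ℂ) * Complex.I) * (‖x i‖ : ℂ) ^ (m - 1) := by
  obtain ⟨i₀, -⟩ := Function.ne_iff.1 hx.1
  have harg : ∀ i, (x i ^ (m - 1)).arg = (x i₀ ^ (m - 1)).arg := fun i => by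
    induction hconn i₀ i with
    | refl => rfl
    | tail _ hbc ih =>
      rcases hbc with h | h
      · exact (hx.arg_pow_eq_of_solidArc hm hA hirr h).trans ih
      · exact (hx.arg_pow_eq_of_solidArc hm hA hirr h).symm.trans ih
  refine ⟨(x i₀ ^ (m - 1)).arg, fun i => ?_⟩
  conv_lhs => rw [← Complex.norm_mul_exp_arg_mul_I (x i ^ (m - 1))]
  rw [harg i, norm_pow, Complex.ofReal_pow, mul_comm]


end PaperTensor
end
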